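/- arXiv:1910.04229 — 2 statements merged into one kernel-verified Lean document; each statement's English description precedes it below -/
import Mathlib

section
/- Sublinear convergence of three-operator splitting with one Lipschitz operator (Theorem 1): Let d ≥ 1, let f, g : ℝ^d → ℝ be convex, and let h : ℝ^d → ℝ be convex and differentiable with L_h-Lipschitz gradient, L_h > 0. Suppose α, λ, θ > 0 and σ₁, σ₂, σ₃ ≥ 0 are such that the 4×4 symmetric real matrix W₀ + σ₁Q₁ + σ₂Q₂ + σ₃Q₃ is negative semidefinite, where W₀ = [[λ²+θ/α², 0, −λ²−θ/α², −λ], [0,0,0,0], [−λ²−θ/α², 0, λ²+θ/α², λ], [−λ, 0, λ, 0]], Q₁ = B_gᵀ·[[0,1/2],[1/2,0]]·B_g with B_g = [[α,0,0,0],[−1,0,0,1]], Q₂ = B_hᵀ·[[0,1/2],[1/2,−1/L_h]]·B_h with B_h = [[α,0,0,0],[2,−1,0,−1]], and Q₃ = B_fᵀ·[[0,1/2],[1/2,0]]·B_f with B_f = [[0,0,α,0],[0,1,−1,0]]. Then along any TOS trajectory (z^k, x_B^k, y^k, x_A^k, p_g^k, p_f^k) with stepsize α and relaxation λ that admits a TOS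 fixed point (z*, x*, y*, p_g*, p_f*), one has for every k ≥ 1: min over 0 ≤ i < k of ‖p_f^i + p_g^i + ∇h(x_B^i)‖² ≤ ‖z⁰ − z*‖² / (θ k). -/
open scoped RealInnerProductSpace
open Matrix

/-! With `A, B, C, D` the deviations of `x_B, y, x_A, z` from the fixed point, monotonicity of
the subdifferentials of `g` and `f` and cocoercivity of `∇h` (Baillon–Haddad, via the descent
lemma) make the Gram pairings of `(A, B, C, D)` with `Q₁, Q₂, Q₃` nonnegative, while the pairing
with `W₀` is `θ/α² ‖A - C‖² + ‖z⁺ - z*‖² - ‖z - z*‖²`. Negative semidefiniteness of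
`W₀ + Σ σᵢ Qᵢ`, applied coordinatewise in an orthonormal basis, therefore yields
`θ ‖p_f + p_g + ∇h(x_B)‖² ≤ ‖z^k - z*‖² - ‖z^{k+1} - z*‖²`, since `A - C = α (p_f + p_g + ∇h(x_B))`;
telescoping bounds the smallest residual by the average. -/

/-- The matrix `W₀` appearing in the sublinear-rate certificate. -/
noncomputable def W0mat (α lam θ : ℝ) : Matrix (Fin 4) (Fin 4) ℝ :=
  !![lam ^ 2 + θ / α ^ 2, 0, -lam ^ 2 - θ / α ^ 2, -lam;
     0, 0, 0, 0;
     -lam ^ 2 - θ / α ^ 2, 0, lam ^ 2 + θ / α ^ 2, lam;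
     -lam, 0, lam, 0]

noncomputable def BgMat (α : ℝ) : Matrix (Fin 2) (Fin 4) ℝ := !![α, 0, 0, 0; -1, 0, 0, 1]

noncomputable def BhMat (α : ℝ) : Matrix (Fin 2) (Fin 4) ℝ := !![α, 0, 0, 0; 2, -1, 0, -1]

noncomputable def BfMat (α : ℝ) : Matrix (Fin 2) (Fin 4) ℝ := !![0, 0, α, 0; 0, 1, -1, 0]

/-- `Q₁ = B_gᵀ · [[0,1/2],[1/2,0]] · B_g`. -/
noncomputable def Q1mat (α : ℝ) : Matrix (Fin 4) (Fin 4) ℝ :=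
  (BgMat α)ᵀ * !![(0 : ℝ), 1 / 2; 1 / 2, 0] * BgMat α

/-- `Q₂ = B_hᵀ · [[0,1/2],[1/2,−1/L_h]] · B_h`. -/
noncomputable def Q2mat (α L_h : ℝ) : Matrix (Fin 4) (Fin 4) ℝ :=
  (BhMat α)ᵀ * !![(0 : ℝ), 1 / 2; 1 / 2, -1 / L_h] * BhMat α

/-- `Q₃ = B_fᵀ · [[0,1/2],[1/2,0]] · B_f`. -/
noncomputable def Q3mat (α : ℝ) : Matrix (Fin 4) (Fin 4) ℝ :=
  (BfMat α)ᵀ * !![(0 : ℝ), 1 / 2; 1 / 2, 0] * BfMat α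

section SmoothConvex

variable {E : Type*} [NormedAddCommGroup E] [InnerProductSpace ℝ E] [CompleteSpace E]
  {h : E → ℝ} {G : E → E} {L : ℝ}

lemma HasGradientAt.hasDerivAt_comp_add_smul {g a v : E} {t : ℝ}
    (hg : HasGradientAt h g (a + t • v)) :
    HasDerivAt (fun s : ℝ => h (a + s • v)) ⟪g, v⟫ t := by
  have hline : HasDerivAt (fun s : ℝ => a + s • v) v t := by
    simpa using ((hasDerivAt_id t).smul_const v).const_add a
  simpa [InnerProductSpace.toDual_apply_apply, Function.comp_def] using
    (hasGradientAt_iff_hasFDerivAt.1 hg).comp_hasDerivAt t hline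

lemma ConvexOn.add_inner_le_of_hasGradientAt (hh : ConvexOn ℝ Set.univ h) {g x : E}
    (hg : HasGradientAt h g x) (w : E) :
    h x + ⟪g, w - x⟫ ≤ h w := by
  have hline : ConvexOn ℝ Set.univ (fun t : ℝ => h (x + t • (w - x))) := by
    simpa [Function.comp_def, AffineMap.lineMap_apply, add_comm] using
      hh.comp_affineMap (AffineMap.lineMap x w : ℝ →ᵃ[ℝ] E)
  have hslope := hline.le_slope_of_hasDerivAt (Set.mem_univ 0) (Set.mem_univ 1) one_pos
    (HasGradientAt.hasDerivAt_comp_add_smul (by simpa using hg))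
  simp only [slope_def_field] at hslope
  norm_num at hslope
  linarith

lemma le_add_inner_add_sq_of_lipschitz_gradient (hdiff : ∀ x, HasGradientAt h (G x) x)
    (hlip : ∀ x y, ‖G x - G y‖ ≤ L * ‖x - y‖) (a b : E) :
    h b ≤ h a + ⟪G a, b - a⟫ + L / 2 * ‖b - a‖ ^ 2 := by
  set v := b - a
  set φ := fun t : ℝ => h (a + t • v) - t * ⟪G a, v⟫ - L / 2 * ‖v‖ ^ 2 * t ^ 2
  have hφ : ∀ t : ℝ, HasDerivAt φ (⟪G (a + t • v) - G a, v⟫ - L * ‖v‖ ^ 2 * t) t := by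
    intro t
    have hquad : HasDerivAt (fun s : ℝ => L / 2 * ‖v‖ ^ 2 * s ^ 2) (L * ‖v‖ ^ 2 * t) t :=
      ((hasDerivAt_pow 2 t).const_mul (L / 2 * ‖v‖ ^ 2)).congr_deriv (by ring)
    refine ((((hdiff (a + t • v)).hasDerivAt_comp_add_smul).sub
      ((hasDerivAt_id t).mul_const ⟪G a, v⟫)).sub hquad).congr_deriv ?_
    rw [inner_sub_left, one_mul]
  have hφ_diff : Differentiable ℝ φ := fun t => (hφ t).differentiableAt
  have hanti : AntitoneOn φ (Set.Icc 0 1) := by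
    refine antitoneOn_of_deriv_nonpos (convex_Icc 0 1) hφ_diff.continuous.continuousOn
      hφ_diff.differentiableOn fun t ht => ?_
    rw [interior_Icc] at ht
    have hG : ‖G (a + t • v) - G a‖ ≤ L * (t * ‖v‖) := by
      simpa [norm_smul, abs_of_nonneg ht.1.le] using hlip (a + t • v) a
    rw [(hφ t).deriv]
    nlinarith [real_inner_le_norm (G (a + t • v) - G a) v, norm_nonneg v]
  have h01 := hanti (by simp) (by simp) zero_le_one
  simp only [φ, v] at h01
  norm_num at h01
  linarith

lemma ConvexOn.add_inner_add_sq_le_of_lipschitz_gradient (hh : ConvexOn ℝ Set.univ h)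
    (hL : 0 < L) (hdiff : ∀ x, HasGradientAt h (G x) x) (hlip : ∀ x y, ‖G x - G y‖ ≤ L * ‖x - y‖)
    (p q : E) :
    h p + ⟪G p, q - p⟫ + 1 / (2 * L) * ‖G q - G p‖ ^ 2 ≤ h q := by
  set D := G q - G p
  -- evaluate the lower and upper quadratic bounds at the gradient step `u` from `q`
  set u := q - (1 / L) • D
  have hlower := hh.add_inner_le_of_hasGradientAt (hdiff p) u
  have hupper := le_add_inner_add_sq_of_lipschitz_gradient hdiff hlip q u
  have hup : u - p = (q - p) - (1 / L) • D := by simp only [u]; abel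
  have huq : u - q = -((1 / L) • D) := by simp only [u]; abel
  have hD : 1 / L * ⟪G q, D⟫ - 1 / L * ⟪G p, D⟫ = 1 / L * ‖D‖ ^ 2 := by
    rw [← mul_sub, ← inner_sub_left, real_inner_self_eq_norm_sq]
  rw [hup, inner_sub_right, real_inner_smul_right] at hlower
  rw [huq, inner_neg_right, real_inner_smul_right, norm_neg, norm_smul, Real.norm_eq_abs,
    abs_of_pos (one_div_pos.2 hL)] at hupper
  have hscale : L / 2 * (1 / L * ‖D‖) ^ 2 = 1 / (2 * L) * ‖D‖ ^ 2 := by field_simp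
  have hsplit : 1 / L * ‖D‖ ^ 2 = 2 * (1 / (2 * L) * ‖D‖ ^ 2) := by field_simp
  linarith

lemma ConvexOn.gradient_cocoercive (hh : ConvexOn ℝ Set.univ h) (hL : 0 < L)
    (hdiff : ∀ x, HasGradientAt h (G x) x) (hlip : ∀ x y, ‖G x - G y‖ ≤ L * ‖x - y‖)
    (x y : E) :
    1 / L * ‖G x - G y‖ ^ 2 ≤ ⟪G x - G y, x - y⟫ := by
  have hxy := hh.add_inner_add_sq_le_of_lipschitz_gradient hL hdiff hlip x y
  have hyx := hh.add_inner_add_sq_le_of_lipschitz_gradient hL hdiff hlip y x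
  rw [norm_sub_rev] at hxy
  have hsum : ⟪G x, y - x⟫ + ⟪G y, x - y⟫ = -⟪G x - G y, x - y⟫ := by
    simp only [inner_sub_left, inner_sub_right]; ring
  have hsplit : 1 / L * ‖G x - G y‖ ^ 2 = 2 * (1 / (2 * L) * ‖G x - G y‖ ^ 2) := by
    field_simp
  linarith

end SmoothConvex

def IsSubgradient {E : Type*} [NormedAddCommGroup E] [InnerProductSpace ℝ E]
    (φ : E → ℝ) (x p : E) : Prop :=
  ∀ w, φ x + ⟪p, w - x⟫ ≤ φ w

lemma IsSubgradient.inner_sub_nonneg {E : Type*} [NormedAddCommGroup E] [InnerProductSpace ℝ E]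
    {φ : E → ℝ} {x y p q : E} (hp : IsSubgradient φ x p) (hq : IsSubgradient φ y q) :
    0 ≤ ⟪p - q, x - y⟫ := by
  have hpy := hp y
  have hqx := hq x
  have hsum : ⟪p, y - x⟫ + ⟪q, x - y⟫ = -⟪p - q, x - y⟫ := by
    simp only [inner_sub_left, inner_sub_right]; ring
  linarith

lemma sum_mul_inner_nonpos_of_dotProduct_mulVec_nonpos {ι E : Type*} [Fintype ι]
    [NormedAddCommGroup E] [InnerProductSpace ℝ E] [FiniteDimensional ℝ E]
    (M : Matrix ι ι ℝ) (hM : ∀ v, v ⬝ᵥ (M *ᵥ v) ≤ 0) (w : ι → E) :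
    ∑ i, ∑ j, M i j * ⟪w i, w j⟫ ≤ 0 := by
  set b := stdOrthonormalBasis ℝ E
  have hinner : ∀ i j, ⟪w i, w j⟫ = ∑ t, ⟪w i, b t⟫ * ⟪w j, b t⟫ := fun i j => by
    simp only [← b.sum_inner_mul_inner (w i) (w j), real_inner_comm (w j)]
  calc ∑ i, ∑ j, M i j * ⟪w i, w j⟫
      = ∑ t, (fun i => ⟪w i, b t⟫) ⬝ᵥ (M *ᵥ fun i => ⟪w i, b t⟫) := by
        simp only [hinner, dotProduct, mulVec, Finset.mul_sum]
        refine (Finset.sum_congr rfl fun i _ => Finset.sum_comm).trans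
          (Finset.sum_comm.trans ?_)
        exact Finset.sum_congr rfl fun t _ => Finset.sum_congr rfl fun i _ =>
          Finset.sum_congr rfl fun j _ => by ring
    _ ≤ 0 := Finset.sum_nonpos fun t _ => hM _

lemma exists_lt_le_div_of_le_sub_succ {θ : ℝ} (hθ : 0 < θ) {a V : ℕ → ℝ}
    (hV : ∀ n, 0 ≤ V n) (hstep : ∀ n, θ * a n ≤ V n - V (n + 1)) {k : ℕ} (hk : 0 < k) :
    ∃ i < k, a i ≤ V 0 / (θ * k) := by
  obtain ⟨i, hi, hmin⟩ := Finset.exists_min_image (Finset.range k) a ⟨0, Finset.mem_range.2 hk⟩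
  refine ⟨i, Finset.mem_range.1 hi, ?_⟩
  have htelescope : θ * ∑ n ∈ Finset.range k, a n ≤ V 0 - V k := by
    rw [Finset.mul_sum, ← Finset.sum_range_sub' V k]
    exact Finset.sum_le_sum fun n _ => hstep n
  have hsum : k * a i ≤ ∑ n ∈ Finset.range k, a n := by
    simpa using Finset.card_nsmul_le_sum (Finset.range k) a (a i) hmin
  rw [le_div_iff₀ (by positivity)]
  nlinarith [hV k]

lemma Q1mat_eq (α : ℝ) : Q1mat α =
    !![-α, 0, 0, α/2; 0, 0, 0, 0; 0, 0, 0, 0; α/2, 0, 0, 0] := by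
  ext i j
  fin_cases i <;> fin_cases j <;>
    simp [Q1mat, BgMat, Matrix.mul_apply, Matrix.transpose_apply,
      Fin.sum_univ_two] <;> ring

lemma Q2mat_eq (α L : ℝ) : Q2mat α L =
    !![2*α - 4/L, 2/L - α/2, 0, 2/L - α/2;
       2/L - α/2, -(1/L), 0, -(1/L);
       0, 0, 0, 0;
       2/L - α/2, -(1/L), 0, -(1/L)] := by
  ext i j
  fin_cases i <;> fin_cases j <;>
    simp [Q2mat, BhMat, Matrix.mul_apply, Matrix.transpose_apply,
      Fin.sum_univ_two] <;> ring

lemma Q3mat_eq (α : ℝ) : Q3mat α =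
    !![0, 0, 0, 0; 0, 0, α/2, 0; 0, α/2, -α, 0; 0, 0, 0, 0] := by
  ext i j
  fin_cases i <;> fin_cases j <;>
    simp [Q3mat, BfMat, Matrix.mul_apply, Matrix.transpose_apply,
      Fin.sum_univ_two] <;> ring

lemma sum_certificate_mul_inner_eq {E : Type*} [NormedAddCommGroup E] [InnerProductSpace ℝ E]
    (α lam θ σ₁ σ₂ σ₃ L : ℝ) (A B C D : E) :
    ∑ p, ∑ q, (W0mat α lam θ + σ₁ • Q1mat α + σ₂ • Q2mat α L + σ₃ • Q3mat α) p q
        * ⟪![A, B, C, D] p, ![A, B, C, D] q⟫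
      = θ / α ^ 2 * ‖A - C‖ ^ 2 + ‖D + lam • (C - A)‖ ^ 2 - ‖D‖ ^ 2
        + σ₁ * (α * ⟪A, D - A⟫)
        + σ₂ * (α * ⟪A, (2 : ℝ) • A - B - D⟫ - 1 / L * ‖(2 : ℝ) • A - B - D‖ ^ 2)
        + σ₃ * (α * ⟪C, B - C⟫) := by
  rw [Q1mat_eq, Q2mat_eq, Q3mat_eq]
  simp only [W0mat, smul_of, smul_cons, smul_eq_mul, mul_neg, mul_zero, smul_empty, of_add_of,
    add_cons, head_cons, tail_cons, add_zero, empty_add_empty, one_div, zero_add, of_apply,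
    cons_val', cons_val_fin_one, Fin.sum_univ_four, cons_val_zero, cons_val_one, cons_val,
    neg_mul]
  simp only [← real_inner_self_eq_norm_sq, inner_sub_left,
    inner_sub_right, inner_add_left, inner_add_right, real_inner_smul_left, real_inner_smul_right]
  simp only [real_inner_comm B A, real_inner_comm C A, real_inner_comm D A,
    real_inner_comm C B, real_inner_comm D B, real_inner_comm D C]
  ring

lemma tos_certificate_decrease {E : Type*} [NormedAddCommGroup E] [InnerProductSpace ℝ E]
    [FiniteDimensional ℝ E] {α lam θ σ₁ σ₂ σ₃ L : ℝ} (hσ₁ : 0 ≤ σ₁) (hσ₂ : 0 ≤ σ₂)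
    (hσ₃ : 0 ≤ σ₃)
    (hNSD : ∀ v : Fin 4 → ℝ,
      v ⬝ᵥ ((W0mat α lam θ + σ₁ • Q1mat α + σ₂ • Q2mat α L + σ₃ • Q3mat α) *ᵥ v) ≤ 0)
    {A B C D : E} (hg : 0 ≤ α * ⟪A, D - A⟫)
    (hh : 1 / L * ‖(2 : ℝ) • A - B - D‖ ^ 2 ≤ α * ⟪A, (2 : ℝ) • A - B - D⟫)
    (hf : 0 ≤ α * ⟪C, B - C⟫) :
    θ / α ^ 2 * ‖A - C‖ ^ 2 + ‖D + lam • (C - A)‖ ^ 2 ≤ ‖D‖ ^ 2 := by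
  have hgram := sum_mul_inner_nonpos_of_dotProduct_mulVec_nonpos _ hNSD ![A, B, C, D]
  rw [sum_certificate_mul_inner_eq] at hgram
  linarith [mul_nonneg hσ₁ hg, mul_nonneg hσ₂ (sub_nonneg.2 hh), mul_nonneg hσ₃ hf]

section Step

variable {E : Type*} [NormedAddCommGroup E] [InnerProductSpace ℝ E] [FiniteDimensional ℝ E]
  {f g h : E → ℝ} {G : E → E} {L α lam θ σ₁ σ₂ σ₃ : ℝ}
  {z xB y xA pg pf zs xs ys pgs pfs : E}

lemma tos_step_decrease (hL : 0 < L) (hh : ConvexOn ℝ Set.univ h)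
    (hdiff : ∀ x, HasGradientAt h (G x) x) (hlip : ∀ x y, ‖G x - G y‖ ≤ L * ‖x - y‖)
    (hα : α ≠ 0) (hσ₁ : 0 ≤ σ₁) (hσ₂ : 0 ≤ σ₂) (hσ₃ : 0 ≤ σ₃)
    (hNSD : ∀ v : Fin 4 → ℝ,
      v ⬝ᵥ ((W0mat α lam θ + σ₁ • Q1mat α + σ₂ • Q2mat α L + σ₃ • Q3mat α) *ᵥ v) ≤ 0)
    (hsubg : IsSubgradient g xB pg) (hsubf : IsSubgradient f xA pf)
    (hxB : xB = z - α • pg) (hy : y = (2 : ℝ) • xB - z - α • G xB) (hxA : xA = y - α • pf)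
    (hsubgs : IsSubgradient g xs pgs) (hsubfs : IsSubgradient f xs pfs)
    (hxs : xs = zs - α • pgs) (hys : ys = (2 : ℝ) • xs - zs - α • G xs)
    (hxAs : xs = ys - α • pfs) :
    θ * ‖pf + pg + G xB‖ ^ 2 ≤ ‖z - zs‖ ^ 2 - ‖z + lam • (xA - xB) - zs‖ ^ 2 := by
  have hg : 0 ≤ α * ⟪xB - xs, (z - zs) - (xB - xs)⟫ := by
    have hDA : (z - zs) - (xB - xs) = α • (pg - pgs) := by rw [hxB, hxs]; module
    rw [hDA, real_inner_smul_right, ← mul_assoc, real_inner_comm]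
    exact mul_nonneg (mul_self_nonneg α) (hsubg.inner_sub_nonneg hsubgs)
  have hf : 0 ≤ α * ⟪xA - xs, (y - ys) - (xA - xs)⟫ := by
    have hBC : (y - ys) - (xA - xs) = α • (pf - pfs) := by
      rw [hxA, hxAs]; module
    rw [hBC, real_inner_smul_right, ← mul_assoc, real_inner_comm]
    exact mul_nonneg (mul_self_nonneg α) (hsubf.inner_sub_nonneg hsubfs)
  have hh : 1 / L * ‖(2 : ℝ) • (xB - xs) - (y - ys) - (z - zs)‖ ^ 2
      ≤ α * ⟪xB - xs, (2 : ℝ) • (xB - xs) - (y - ys) - (z - zs)⟫ := by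
    have h2ABD : (2 : ℝ) • (xB - xs) - (y - ys) - (z - zs) = α • (G xB - G xs) := by
      rw [hy, hys]; module
    rw [h2ABD, real_inner_smul_right, norm_smul, mul_pow, Real.norm_eq_abs, sq_abs,
      real_inner_comm]
    have hcoco := hh.gradient_cocoercive hL hdiff hlip xB xs
    nlinarith [sq_nonneg α]
  have hdecrease := tos_certificate_decrease (θ := θ) (lam := lam) hσ₁ hσ₂ hσ₃ hNSD hg hh hf
  have hres : (xB - xs) - (xA - xs) = α • (pf + pg + G xB) := by
    have hzB : z - xB = α • pg := by rw [hxB]; module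
    rw [hxA, hy]
    linear_combination (norm := module) hzB
  have hnext : z + lam • (xA - xB) - zs = (z - zs) + lam • ((xA - xs) - (xB - xs)) := by module
  rw [hres, norm_smul, mul_pow, Real.norm_eq_abs, sq_abs] at hdecrease
  rw [hnext]
  have hθ : θ / α ^ 2 * (α ^ 2 * ‖pf + pg + G xB‖ ^ 2) = θ * ‖pf + pg + G xB‖ ^ 2 := by
    field_simp
  linarith

end Step

theorem tos_sublinear_one_lipschitz_general
    {d : ℕ}
    (f g h : EuclideanSpace ℝ (Fin d) → ℝ)
    (hgrad : EuclideanSpace ℝ (Fin d) → EuclideanSpace ℝ (Fin d))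
    (L_h : ℝ) (hLh : 0 < L_h)
    (hh : ConvexOn ℝ Set.univ h)
    (hdiff : ∀ x, HasGradientAt h (hgrad x) x)
    (hlip : ∀ x y, ‖hgrad x - hgrad y‖ ≤ L_h * ‖x - y‖)
    (α lam θ σ₁ σ₂ σ₃ : ℝ)
    (hα : 0 < α) (hθ : 0 < θ)
    (hσ₁ : 0 ≤ σ₁) (hσ₂ : 0 ≤ σ₂) (hσ₃ : 0 ≤ σ₃)
    (hNSD : ∀ v : Fin 4 → ℝ,
      v ⬝ᵥ ((W0mat α lam θ + σ₁ • Q1mat α + σ₂ • Q2mat α L_h + σ₃ • Q3mat α) *ᵥ v) ≤ 0)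
    -- TOS trajectory
    (z xB y xA pg pf : ℕ → EuclideanSpace ℝ (Fin d))
    (hsubg : ∀ k w, g (xB k) + ⟪pg k, w - xB k⟫ ≤ g w)
    (hsubf : ∀ k w, f (xA k) + ⟪pf k, w - xA k⟫ ≤ f w)
    (hxB : ∀ k, xB k = z k - α • pg k)
    (hy : ∀ k, y k = (2 : ℝ) • xB k - z k - α • hgrad (xB k))
    (hxA : ∀ k, xA k = y k - α • pf k)
    (hz : ∀ k, z (k + 1) = z k + lam • (xA k - xB k))
    -- TOS fixed point
    (zs xs ys pgs pfs : EuclideanSpace ℝ (Fin d))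
    (hsubgs : ∀ w, g xs + ⟪pgs, w - xs⟫ ≤ g w)
    (hsubfs : ∀ w, f xs + ⟪pfs, w - xs⟫ ≤ f w)
    (hxs : xs = zs - α • pgs)
    (hys : ys = (2 : ℝ) • xs - zs - α • hgrad xs)
    (hxAs : xs = ys - α • pfs)
    (k : ℕ) (hk : 1 ≤ k) :
    ∃ i < k, ‖pf i + pg i + hgrad (xB i)‖ ^ 2 ≤ ‖z 0 - zs‖ ^ 2 / (θ * k) := by
  refine exists_lt_le_div_of_le_sub_succ hθ (V := fun n => ‖z n - zs‖ ^ 2)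
    (fun n => sq_nonneg _) (fun n => ?_) hk
  rw [hz n]
  exact tos_step_decrease hLh hh hdiff hlip hα.ne' hσ₁ hσ₂ hσ₃ hNSD (hsubg n) (hsubf n) (hxB n)
    (hy n) (hxA n) hsubgs hsubfs hxs hys hxAs

/-- **Theorem 1** (sublinear convergence of three-operator splitting with one Lipschitz
operator). If `W₀ + σ₁Q₁ + σ₂Q₂ + σ₃Q₃ ⪯ 0`, then along any TOS trajectory admitting a
fixed point, the smallest optimality residual among the first `k` iterates is bounded by
`‖z⁰ − z*‖² / (θ k)`. -/
theorem tos_sublinear_one_lipschitz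
    {d : ℕ} (hd : 1 ≤ d)
    (f g h : EuclideanSpace ℝ (Fin d) → ℝ)
    (hgrad : EuclideanSpace ℝ (Fin d) → EuclideanSpace ℝ (Fin d))
    (L_h : ℝ) (hLh : 0 < L_h)
    (hf : ConvexOn ℝ Set.univ f) (hg : ConvexOn ℝ Set.univ g)
    (hh : ConvexOn ℝ Set.univ h)
    (hdiff : ∀ x, HasGradientAt h (hgrad x) x)
    (hlip : ∀ x y, ‖hgrad x - hgrad y‖ ≤ L_h * ‖x - y‖)
    (α lam θ σ₁ σ₂ σ₃ : ℝ)
    (hα : 0 < α) (hlam : 0 < lam) (hθ : 0 < θ)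
    (hσ₁ : 0 ≤ σ₁) (hσ₂ : 0 ≤ σ₂) (hσ₃ : 0 ≤ σ₃)
    (hNSD : ∀ v : Fin 4 → ℝ,
      v ⬝ᵥ ((W0mat α lam θ + σ₁ • Q1mat α + σ₂ • Q2mat α L_h + σ₃ • Q3mat α) *ᵥ v) ≤ 0)
    -- TOS trajectory
    (z xB y xA pg pf : ℕ → EuclideanSpace ℝ (Fin d))
    (hsubg : ∀ k w, g (xB k) + ⟪pg k, w - xB k⟫ ≤ g w)
    (hsubf : ∀ k w, f (xA k) + ⟪pf k, w - xA k⟫ ≤ f w)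
    (hxB : ∀ k, xB k = z k - α • pg k)
    (hy : ∀ k, y k = (2 : ℝ) • xB k - z k - α • hgrad (xB k))
    (hxA : ∀ k, xA k = y k - α • pf k)
    (hz : ∀ k, z (k + 1) = z k + lam • (xA k - xB k))
    -- TOS fixed point
    (zs xs ys pgs pfs : EuclideanSpace ℝ (Fin d))
    (hsubgs : ∀ w, g xs + ⟪pgs, w - xs⟫ ≤ g w)
    (hsubfs : ∀ w, f xs + ⟪pfs, w - xs⟫ ≤ f w)
    (hxs : xs = zs - α • pgs)
    (hys : ys = (2 : ℝ) • xs - zs - α • hgrad xs)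
    (hxAs : xs = ys - α • pfs)
    (k : ℕ) (hk : 1 ≤ k) :
    ∃ i < k, ‖pf i + pg i + hgrad (xB i)‖ ^ 2 ≤ ‖z 0 - zs‖ ^ 2 / (θ * k) :=
  tos_sublinear_one_lipschitz_general f g h hgrad L_h hLh hh hdiff hlip α lam θ σ₁ σ₂ σ₃ hα hθ hσ₁
    hσ₂ hσ₃ hNSD z xB y xA pg pf hsubg hsubf hxB hy hxA hz zs xs ys pgs pfs hsubgs hsubfs hxs hys
    hxAs k hk
end

section
/- Fixed points of TOS are minimizers: Let E be a real inner product space, let f, g : E → ℝ be convex, let h : E → ℝ be convex and differentiable, and let α > 0. Suppose z*, x*, y* ∈ E, p_g* is a subgradient of g at x*, p_f* is a subgradient of f at x*, and x* = z* − α p_g*, y* = 2x* − z* − α∇h(x*), x* = y* − α p_f*. Then p_f* + p_g* + ∇h(x*) = 0, and consequently x* is a global minimizer of f + g + h: (f+g+h)(x*) ≤ (f+g+h)(w) for all w ∈ E. -/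
/-!
Eliminating `y*` and `z*` from the three fixed-point equations leaves
`α • (p_f* + p_g* + ∇h(x*)) = 0`. By convexity, `∇h(x*)` is a subgradient of `h` at `x*`, and
subgradients of `f`, `g`, `h` at a common point that sum to zero make that point a minimizer
of `f + g + h`.
-/

open scoped RealInnerProductSpace

theorem ConvexOn.add_fderiv_sub_le {E : Type*} [NormedAddCommGroup E] [NormedSpace ℝ E]
    {h : E → ℝ} {h' : E →L[ℝ] ℝ} {x : E} (hh : ConvexOn ℝ Set.univ h)
    (hd : HasFDerivAt h h' x) (w : E) : h x + h' (w - x) ≤ h w := by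
  let ℓ : ℝ →ᵃ[ℝ] E := AffineMap.lineMap x w
  have hconv : ConvexOn ℝ Set.univ (h ∘ ℓ) := hh.comp_affineMap ℓ
  have hderiv : HasDerivAt (h ∘ ℓ) (h' (w - x)) 0 := by
    rw [← AffineMap.lineMap_apply_zero (k := ℝ) x w] at hd
    exact hd.comp_hasDerivAt 0 AffineMap.hasDerivAt_lineMap
  have := hconv.le_slope_of_hasDerivAt (Set.mem_univ 0) (Set.mem_univ 1) one_pos hderiv
  simp only [slope, ℓ, Function.comp_apply, AffineMap.lineMap_apply_zero,
    AffineMap.lineMap_apply_one, vsub_eq_sub, sub_zero, inv_one, one_smul] at this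
  linarith

section Subgradient

variable {E : Type*} [NormedAddCommGroup E] [InnerProductSpace ℝ E]

def HasSubgradientAt (φ : E → ℝ) (p x : E) : Prop :=
  ∀ w, φ x + ⟪p, w - x⟫ ≤ φ w

theorem HasSubgradientAt.add_add_le_of_add_add_eq_zero {f g h : E → ℝ} {x p q r : E}
    (hp : HasSubgradientAt f p x) (hq : HasSubgradientAt g q x) (hr : HasSubgradientAt h r x)
    (hsum : p + q + r = 0) (w : E) :
    f x + g x + h x ≤ f w + g w + h w := by
  have : ⟪p, w - x⟫ + ⟪q, w - x⟫ + ⟪r, w - x⟫ = 0 := by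
    rw [← inner_add_left, ← inner_add_left, hsum, inner_zero_left]
  linarith [hp w, hq w, hr w]

end Subgradient

theorem tos_fixed_point_sum_eq_zero {E : Type*} [AddCommGroup E] [Module ℝ E]
    {α : ℝ} (hα : α ≠ 0) {z x y pg pf d : E}
    (hx : x = z - α • pg) (hy : y = (2 : ℝ) • x - z - α • d) (hx' : x = y - α • pf) :
    pf + pg + d = 0 := by
  have : α • (pf + pg + d) = 0 := by
    subst hy hx
    rw [← sub_eq_zero] at hx'
    rw [← hx']
    module
  exact (smul_eq_zero.mp this).resolve_left hα

theorem tos_fixed_point_is_minimizer_general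
    {E : Type*} [NormedAddCommGroup E] [InnerProductSpace ℝ E]
    (f g h : E → ℝ) (hgrad : E → E) (α : ℝ) (hα : 0 < α)
    (hh : ConvexOn ℝ Set.univ h)
    (hdiff : ∀ x, HasFDerivAt h (InnerProductSpace.toDualMap ℝ E (hgrad x)) x)
    (zs xs ys pgs pfs : E)
    (hsubg : ∀ w, g xs + ⟪pgs, w - xs⟫ ≤ g w)
    (hsubf : ∀ w, f xs + ⟪pfs, w - xs⟫ ≤ f w)
    (hxs : xs = zs - α • pgs)
    (hys : ys = (2 : ℝ) • xs - zs - α • hgrad xs)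
    (hxAs : xs = ys - α • pfs) :
    pfs + pgs + hgrad xs = 0 ∧
      ∀ w, f xs + g xs + h xs ≤ f w + g w + h w := by
  have hsum : pfs + pgs + hgrad xs = 0 := tos_fixed_point_sum_eq_zero hα.ne' hxs hys hxAs
  have hsubh : HasSubgradientAt h (hgrad xs) xs := hh.add_fderiv_sub_le (hdiff xs)
  exact ⟨hsum, HasSubgradientAt.add_add_le_of_add_add_eq_zero hsubf hsubg hsubh hsum⟩

/-- **Fixed points of TOS are minimizers.** If `(z*, x*, y*, p_g*, p_f*)` satisfies the
fixed-point equations of the three-operator splitting iteration, then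
`p_f* + p_g* + ∇h(x*) = 0` and `x*` is a global minimizer of `f + g + h`. -/
theorem tos_fixed_point_is_minimizer
    {E : Type*} [NormedAddCommGroup E] [InnerProductSpace ℝ E]
    (f g h : E → ℝ) (hgrad : E → E) (α : ℝ) (hα : 0 < α)
    (hf : ConvexOn ℝ Set.univ f) (hg : ConvexOn ℝ Set.univ g)
    (hh : ConvexOn ℝ Set.univ h)
    (hdiff : ∀ x, HasFDerivAt h (InnerProductSpace.toDualMap ℝ E (hgrad x)) x)
    (zs xs ys pgs pfs : E)
    (hsubg : ∀ w, g xs + ⟪pgs, w - xs⟫ ≤ g w)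
    (hsubf : ∀ w, f xs + ⟪pfs, w - xs⟫ ≤ f w)
    (hxs : xs = zs - α • pgs)
    (hys : ys = (2 : ℝ) • xs - zs - α • hgrad xs)
    (hxAs : xs = ys - α • pfs) :
    pfs + pgs + hgrad xs = 0 ∧
      ∀ w, f xs + g xs + h xs ≤ f w + g w + h w :=
  tos_fixed_point_is_minimizer_general f g h hgrad α hα hh hdiff zs xs ys pgs pfs hsubg hsubf hxs
    hys hxAs
end
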